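/- Fix α ∈ ℝ with α ≠ ±1 and b ∈ G. The function f : φ_α(G) → ℝ defined by f(c) := D^α(φ_α⁻¹(c)‖b) is Fréchet differentiable on the open set φ_α(G), and for every a ∈ G its Fréchet derivative at the point c = φ_α(a) is the continuous linear functional u ↦ ∫_B (φ_{−α}(a) − φ_{−α}(b))·u dμ. -/

import Mathlib

open MeasureTheory BoundedContinuousFunction

noncomputable section

namespace Paper

variable {Y : Type*} [TopologicalSpace Y]

/-- Pointwise exponential map on `G = C_b(B;ℝ)`: `expG a x = exp (a x)`. -/
def expG (a : BoundedContinuousFunction Y ℝ) : BoundedContinuousFunction Y ℝ :=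
  BoundedContinuousFunction.ofNormedAddCommGroup (fun x => Real.exp (a x))
    (Real.continuous_exp.comp a.continuous) (Real.exp ‖a‖)
    (fun x => by
      rw [Real.norm_eq_abs, abs_of_pos (Real.exp_pos _)]
      exact Real.exp_le_exp.2 ((le_abs_self _).trans (a.norm_coe_le_norm x)))

@[simp] lemma expG_apply (a : BoundedContinuousFunction Y ℝ) (x : Y) :
    expG a x = Real.exp (a x) := rfl

/-- Amari's α-embedding chart `φ_α`. -/
def phi (α : ℝ) (a : BoundedContinuousFunction Y ℝ) : BoundedContinuousFunction Y ℝ :=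
  if α = 1 then a else (2 / (1 - α)) • (expG (((1 - α) / 2) • a) - 1)

variable [MeasurableSpace Y]

/-- The α-divergence `D^α(a‖b)` (for `α ≠ ±1`) between the finite measures with
`μ`-densities `exp_G(a)` and `exp_G(b)`. -/
def Dalpha (μ : Measure Y) (α : ℝ) (a b : BoundedContinuousFunction Y ℝ) : ℝ :=
  (2 / (1 + α)) * ∫ x, (phi (-1) a x - phi α a x) ∂μ
    + (2 / (1 - α)) * ∫ x, (phi (-1) b x - phi (-α) b x) ∂μ
    - ∫ x, phi α a x * phi (-α) b x ∂μ

/-- The extended Kullback–Leibler divergence `D^{−1}(a‖b)`. -/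
def DKL (μ : Measure Y) (a b : BoundedContinuousFunction Y ℝ) : ℝ :=
  ∫ x, (expG b x - expG a x) ∂μ + ∫ x, expG a x * (a x - b x) ∂μ

end Paper

/-!
The chart `φ_α` is strictly differentiable on the Banach algebra `G`, with derivative at `a` the
multiplication by the unit `exp_G(((1 - α)/2)·a)`. As `φ_α` is injective, the inverse function
theorem makes any left inverse `ψ` of `φ_α` differentiable at `φ_α(a)`, with derivative the
multiplication by the inverse unit. The map `a ↦ D^α(a‖b)` has derivative
`u ↦ ∫ (φ_{-α}(a) - φ_{-α}(b))·exp_G(((1 - α)/2)·a)·u dμ`, because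
`φ_{-α}(a)·exp_G(((1 - α)/2)·a) = (2/(1 + α))·(exp_G(a) - exp_G(((1 - α)/2)·a))`;
by the chain rule the exponential factor cancels.
-/

open NormedSpace ContinuousLinearMap

theorem HasFDerivAt.comp_leftInverse {𝕜 E F G : Type*} [NontriviallyNormedField 𝕜]
    [NormedAddCommGroup E] [NormedSpace 𝕜 E] [CompleteSpace E]
    [NormedAddCommGroup F] [NormedSpace 𝕜 F] [NormedAddCommGroup G] [NormedSpace 𝕜 G]
    {φ : E → F} {φ' : E ≃L[𝕜] F} {ψ : F → E} {f : E → G} {f' : E →L[𝕜] G} {a : E}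
    (hf : HasFDerivAt f f' a) (hψ : Function.LeftInverse ψ φ)
    (hφ : HasStrictFDerivAt φ (φ' : E →L[𝕜] F) a) :
    HasFDerivAt (f ∘ ψ) (f' ∘L (φ'.symm : F →L[𝕜] E)) (φ a) := by
  rw [← hψ a] at hf
  exact hf.comp _ (hφ.to_local_left_inverse (.of_forall hψ)).hasFDerivAt

namespace Paper

section Chart

variable {Y : Type*} [TopologicalSpace Y]

theorem expG_eq_exp : expG (Y := Y) = exp := by
  funext a
  ext x
  have := map_exp ((ContinuousMap.evalAlgHom ℝ ℝ x).comp (toContinuousMapₐ ℝ)) (by fun_prop) a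
  simp only [AlgHom.coe_comp, Function.comp_apply, ContinuousMap.evalAlgHom_apply] at this
  rw [expG_apply, Real.exp_eq_exp_ℝ]
  exact this.symm

theorem expG_add (a a' : Y →ᵇ ℝ) : expG (a + a') = expG a * expG a' := by
  ext x
  simp [Real.exp_add]

theorem expG_zero : expG (0 : Y →ᵇ ℝ) = 1 := by
  ext x
  simp

theorem hasStrictFDerivAt_expG (a : Y →ᵇ ℝ) :
    HasStrictFDerivAt expG (mul ℝ (Y →ᵇ ℝ) (expG a)) a := by
  rw [expG_eq_exp]
  exact hasStrictFDerivAt_exp.congr_fderiv (by ext u : 1; simp)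

def mulExpGEquiv (a : Y →ᵇ ℝ) : (Y →ᵇ ℝ) ≃L[ℝ] (Y →ᵇ ℝ) :=
  .equivOfInverse (mul ℝ _ (expG a)) (mul ℝ _ (expG (-a)))
    (fun u => by simp [← mul_assoc, ← expG_add, expG_zero])
    (fun u => by simp [← mul_assoc, ← expG_add, expG_zero])

theorem phi_apply_of_ne_one {β : ℝ} (hβ : β ≠ 1) (a : Y →ᵇ ℝ) (x : Y) :
    phi β a x = 2 / (1 - β) * (Real.exp ((1 - β) / 2 * a x) - 1) := by
  simp [phi, hβ]

theorem phi_injective (β : ℝ) : Function.Injective (phi (Y := Y) β) := by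
  by_cases hβ : β = 1
  · intro a a' h
    simpa [phi, hβ] using h
  have hβ' : (1 : ℝ) - β ≠ 0 := sub_ne_zero.2 (Ne.symm hβ)
  intro a a' h
  ext x
  have hx := congr($h x)
  simp only [phi_apply_of_ne_one hβ] at hx
  have hexp := Real.exp_injective (sub_left_injective (mul_left_cancel₀ (by simpa) hx))
  exact mul_left_cancel₀ (by simpa) hexp

theorem hasStrictFDerivAt_phi (β : ℝ) (a : Y →ᵇ ℝ) :
    HasStrictFDerivAt (phi β) (mulExpGEquiv (((1 - β) / 2) • a) : (Y →ᵇ ℝ) →L[ℝ] (Y →ᵇ ℝ)) a := by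
  by_cases hβ : β = 1
  · subst hβ
    have hphi : phi (1 : ℝ) = (id : (Y →ᵇ ℝ) → (Y →ᵇ ℝ)) := by
      funext a'
      simp [phi]
    rw [hphi]
    exact (hasStrictFDerivAt_id a).congr_fderiv (by ext u : 1; simp [mulExpGEquiv, expG_zero])
  set s := (1 - β) / 2
  have hphi : phi β = fun a' : Y →ᵇ ℝ => (2 / (1 - β)) • (expG (s • a') - 1) := by
    funext a'
    simp [phi, hβ, s]
  have hs : 2 / (1 - β) * s = 1 := by
    simp only [s]
    field_simp [sub_ne_zero.2 (Ne.symm hβ)]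
  rw [hphi]
  refine ((((hasStrictFDerivAt_expG (s • a)).comp a
    ((s • ContinuousLinearMap.id ℝ (Y →ᵇ ℝ)).hasStrictFDerivAt)).sub_const 1).const_smul
    (2 / (1 - β))).congr_fderiv ?_
  ext u : 1
  simp [mulExpGEquiv, smul_smul, hs]

end Chart

section Integral

variable {Y : Type*} [TopologicalSpace Y] [MeasurableSpace Y] [OpensMeasurableSpace Y]
  (μ : Measure Y) [IsFiniteMeasure μ]

def integralCLM : (Y →ᵇ ℝ) →L[ℝ] ℝ :=
  LinearMap.mkContinuous
    { toFun f := ∫ x, f x ∂μ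
      map_add' f g := integral_add (f.integrable μ) (g.integrable μ)
      map_smul' c _ := integral_smul c _ }
    (μ.real Set.univ) (fun f => f.norm_integral_le_mul_norm μ)

theorem integralCLM_apply (f : Y →ᵇ ℝ) : integralCLM μ f = ∫ x, f x ∂μ :=
  rfl

theorem hasStrictFDerivAt_Dalpha_left {α : ℝ} (hα : α ≠ -1) (a b : Y →ᵇ ℝ) :
    HasStrictFDerivAt (fun a' => Dalpha μ α a' b)
      ((integralCLM μ ∘L mul ℝ _ (phi (-α) a - phi (-α) b)) ∘L
        (mulExpGEquiv (((1 - α) / 2) • a) : (Y →ᵇ ℝ) →L[ℝ] (Y →ᵇ ℝ))) a := by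
  set C := 2 / (1 - α) * ∫ x, (phi (-1) b x - phi (-α) b x) ∂μ
  have hDalpha : (fun a' => Dalpha μ α a' b) = fun a' =>
      2 / (1 + α) * integralCLM μ (phi (-1) a' - phi α a') + C
        - integralCLM μ (phi (-α) b * phi α a') := by
    funext a'
    rw [mul_comm (phi (-α) b)]
    simp only [Dalpha, integralCLM_apply, C, BoundedContinuousFunction.coe_sub,
      BoundedContinuousFunction.coe_mul, Pi.sub_apply, Pi.mul_apply]
  rw [hDalpha]
  refine ((((integralCLM μ).hasStrictFDerivAt.comp a
    ((hasStrictFDerivAt_phi (-1) a).sub (hasStrictFDerivAt_phi α a))).const_mul _).add_const C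
    |>.sub ((integralCLM μ).hasStrictFDerivAt.comp a
      ((mul ℝ _ (phi (-α) b)).hasStrictFDerivAt.comp a (hasStrictFDerivAt_phi α a)))).congr_fderiv ?_
  ext u
  simp only [ContinuousLinearMap.comp_apply, _root_.sub_apply, _root_.smul_apply, smul_eq_mul]
  rw [← smul_eq_mul, ← map_smul, ← map_sub]
  congr 1
  ext x
  simp only [mulExpGEquiv, sub_neg_eq_add, add_self_div_two, one_smul,
    ContinuousLinearEquiv.coe_coe, ContinuousLinearEquiv.equivOfInverse_apply, mul_apply',
    BoundedContinuousFunction.coe_sub, BoundedContinuousFunction.coe_smul,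
    BoundedContinuousFunction.coe_mul, Pi.sub_apply, Pi.mul_apply, expG_apply, smul_eq_mul]
  have hsplit : Real.exp (a x) = Real.exp ((1 + α) / 2 * a x) * Real.exp ((1 - α) / 2 * a x) := by
    rw [← Real.exp_add]
    ring_nf
  simp only [phi_apply_of_ne_one (show -α ≠ 1 by contrapose! hα; linarith), sub_neg_eq_add, hsplit]
  ring

end Integral

end Paper

theorem statement_9_general {X : Type*} [NormedAddCommGroup X]
    [MeasurableSpace X] [OpensMeasurableSpace X]
    (B : Set X)
    (μ : Measure B) [IsProbabilityMeasure μ]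
    (α : ℝ) (hα2 : α ≠ -1) (b : BoundedContinuousFunction B ℝ) :
    ∃ ψ : BoundedContinuousFunction B ℝ → BoundedContinuousFunction B ℝ,
      (∀ a, ψ (Paper.phi α a) = a) ∧
      ∀ a : BoundedContinuousFunction B ℝ,
        ∃ D : BoundedContinuousFunction B ℝ →L[ℝ] ℝ,
          (∀ u : BoundedContinuousFunction B ℝ,
            D u = ∫ x, (Paper.phi (-α) a x - Paper.phi (-α) b x) * u x ∂μ) ∧
          HasFDerivAt (fun c => Paper.Dalpha μ α (ψ c) b) D (Paper.phi α a) := by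
  have hψ : Function.LeftInverse (Function.invFun (Paper.phi α)) (Paper.phi (Y := B) α) :=
    Function.leftInverse_invFun (Paper.phi_injective α)
  refine ⟨_, hψ, fun a => ⟨Paper.integralCLM μ ∘L mul ℝ _ (Paper.phi (-α) a - Paper.phi (-α) b),
    fun u => rfl, ?_⟩⟩
  refine ((Paper.hasStrictFDerivAt_Dalpha_left μ hα2 a b).hasFDerivAt.comp_leftInverse hψ
    (Paper.hasStrictFDerivAt_phi α a)).congr_fderiv ?_
  ext u
  simp

/-- for fixed `α ≠ ±1` and `b ∈ G`, the function
`f(c) = D^α(φ_α⁻¹(c)‖b)` is Fréchet differentiable on the open set `φ_α(G)`, with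
derivative at `c = φ_α(a)` the functional `u ↦ ∫ (φ_{−α}(a) − φ_{−α}(b))·u dμ`. -/
theorem statement_9 {X : Type*} [NormedAddCommGroup X] [NormedSpace ℝ X]
    [MeasurableSpace X] [OpensMeasurableSpace X]
    (B : Set X) (hB : IsOpen B) (hBne : B.Nonempty)
    (μ : Measure B) [IsProbabilityMeasure μ]
    (α : ℝ) (hα1 : α ≠ 1) (hα2 : α ≠ -1) (b : BoundedContinuousFunction B ℝ) :
    ∃ ψ : BoundedContinuousFunction B ℝ → BoundedContinuousFunction B ℝ,
      (∀ a, ψ (Paper.phi α a) = a) ∧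
      ∀ a : BoundedContinuousFunction B ℝ,
        ∃ D : BoundedContinuousFunction B ℝ →L[ℝ] ℝ,
          (∀ u : BoundedContinuousFunction B ℝ,
            D u = ∫ x, (Paper.phi (-α) a x - Paper.phi (-α) b x) * u x ∂μ) ∧
          HasFDerivAt (fun c => Paper.Dalpha μ α (ψ c) b) D (Paper.phi α a) :=
  statement_9_general B μ α hα2 b
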